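/- Fix an integer N ≥ 2 and a probability vector p on Fin r (the ground-truth distribution). For an integer c ≥ 2, let R(p,c) = 1 - (N/(2·(N-1))) · VI₂(p, u_c) denote the Rand index between the ground truth and a statistically independent balanced candidate partition with c clusters, where u_c is the uniform probability vector on Fin c. Then: (1) if H₂(p) < 1, then R(p,·) is strictly decreasing, i.e., for all integers 2 ≤ c < c', R(p,c') < R(p,c); (2) if H₂(p) = 1, then R(p,·) is constant, i.e., R(p,c) = R(p,c') for all integers c, c' ≥ 2; (3) if H₂(p) > 1, then R(p,·) is strictly increasing, i.e., for all integers 2 ≤ c < c', R(p,c) < R(p,c'). -/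

import Mathlib

/-- The quadratic entropy of a finitely supported probability vector. -/
noncomputable def quadEntropy {α : Type*} [Fintype α] (x : α → ℝ) : ℝ :=
  2 * (1 - ∑ i, (x i) ^ 2)

/-- The quadratic variation of information between (the distributions of)
two statistically independent partitions. -/
noncomputable def VI2 {α β : Type*} [Fintype α] [Fintype β] (p : α → ℝ) (q : β → ℝ) : ℝ :=
  2 * quadEntropy (fun ij : α × β => p ij.1 * q ij.2) - quadEntropy p - quadEntropy q

/-- The uniform (balanced) probability vector on `Fin c`. -/
noncomputable def unif (c : ℕ) : Fin c → ℝ := fun _ => 1 / (c : ℝ)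

/-- The (expected) Rand index between a ground-truth distribution `p` and a
statistically independent balanced candidate partition with `c` clusters. -/
noncomputable def randGT (N : ℕ) {r : ℕ} (p : Fin r → ℝ) (c : ℕ) : ℝ :=
  1 - ((N : ℝ) / (2 * ((N : ℝ) - 1))) * VI2 p (unif c)

/-!
Since `1 - H₂(x)/2 = ∑ xᵢ²` is multiplicative under products, `VI₂(p, q) = H₂(p) + H₂(q) - H₂(p)·H₂(q)`.
With `H₂(u_c) = 2 - 2/c` this gives `R(p, c) = R(p, c') + N/(N-1) · (1 - H₂(p)) · (1/c - 1/c')`,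
so the direction of the bias is the sign of `1 - H₂(p)`.
-/

theorem quadEntropy_prod {α β : Type*} [Fintype α] [Fintype β] (p : α → ℝ) (q : β → ℝ) :
    quadEntropy (fun ij : α × β => p ij.1 * q ij.2) =
      quadEntropy p + quadEntropy q - quadEntropy p * quadEntropy q / 2 := by
  have hsq : ∑ ij : α × β, (p ij.1 * q ij.2) ^ 2 = (∑ i, p i ^ 2) * ∑ j, q j ^ 2 := by
    simp only [mul_pow, Fintype.sum_prod_type, Finset.sum_mul_sum]
  simp only [quadEntropy, hsq]
  ring

theorem VI2_eq {α β : Type*} [Fintype α] [Fintype β] (p : α → ℝ) (q : β → ℝ) :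
    VI2 p q = quadEntropy p + quadEntropy q - quadEntropy p * quadEntropy q := by
  rw [VI2, quadEntropy_prod]
  ring

-- Also at `c = 0`, where both sides are `2` since `2 / 0 = 0`.
theorem quadEntropy_unif (c : ℕ) : quadEntropy (unif c) = 2 - 2 / c := by
  rcases Nat.eq_zero_or_pos c with rfl | hc
  · simp [quadEntropy]
  · have hc' : (c : ℝ) ≠ 0 := by positivity
    simp only [quadEntropy, unif, Finset.sum_const, Finset.card_univ, Fintype.card_fin,
      nsmul_eq_mul]
    field_simp

theorem randGT_sub_randGT (N : ℕ) {r : ℕ} (p : Fin r → ℝ) (c c' : ℕ) :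
    randGT N p c - randGT N p c' =
      N / (N - 1) * (1 - quadEntropy p) * (1 / c - 1 / c') := by
  simp only [randGT, VI2_eq, quadEntropy_unif, mul_comm (2 : ℝ), ← div_div]
  ring

theorem randGT_bias_of_quadEntropy_general {N r : ℕ} (hN : 2 ≤ N)
    (p : Fin r → ℝ) :
    (quadEntropy p < 1 →
      ∀ c c' : ℕ, 2 ≤ c → c < c' → randGT N p c' < randGT N p c) ∧
    (quadEntropy p = 1 →
      ∀ c c' : ℕ, 2 ≤ c → 2 ≤ c' → randGT N p c = randGT N p c') ∧
    (1 < quadEntropy p →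
      ∀ c c' : ℕ, 2 ≤ c → c < c' → randGT N p c < randGT N p c') := by
  have hN' : 0 < (N : ℝ) / (N - 1) := by
    have : (2 : ℝ) ≤ N := by exact_mod_cast hN
    exact div_pos (by linarith) (by linarith)
  have hinv {c c' : ℕ} (hc : 2 ≤ c) (hcc' : c < c') : 0 < 1 / (c : ℝ) - 1 / c' :=
    sub_pos.mpr <| one_div_lt_one_div_of_lt (Nat.cast_pos.mpr (by omega)) (by exact_mod_cast hcc')
  refine ⟨fun hH c c' hc hcc' => ?_, fun hH c c' _ _ => ?_, fun hH c c' hc hcc' => ?_⟩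
  · have := mul_pos (mul_pos hN' (sub_pos.mpr hH)) (hinv hc hcc')
    linarith [randGT_sub_randGT N p c c']
  · rw [← sub_eq_zero, randGT_sub_randGT, hH, sub_self, mul_zero, zero_mul]
  · have := mul_neg_of_neg_of_pos (mul_neg_of_pos_of_neg hN' (sub_neg.mpr hH)) (hinv hc hcc')
    linarith [randGT_sub_randGT N p c c']

theorem randGT_bias_of_quadEntropy {N r : ℕ} (hN : 2 ≤ N)
    (p : Fin r → ℝ) (hp : ∀ i, 0 ≤ p i) (hp1 : ∑ i, p i = 1) :
    (quadEntropy p < 1 →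
      ∀ c c' : ℕ, 2 ≤ c → c < c' → randGT N p c' < randGT N p c) ∧
    (quadEntropy p = 1 →
      ∀ c c' : ℕ, 2 ≤ c → 2 ≤ c' → randGT N p c = randGT N p c') ∧
    (1 < quadEntropy p →
      ∀ c c' : ℕ, 2 ≤ c → c < c' → randGT N p c < randGT N p c') :=
  randGT_bias_of_quadEntropy_general hN p
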